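/- Let V be a finite-dimensional real inner product space, K ⊆ V a closed convex cone, and K* = {D ∈ V : ⟨D, γ⟩ ≥ 0 for all γ ∈ K} its dual cone. Let A ∈ V satisfy ⟨A, γ⟩ > 0 for all γ ∈ K \ {0}, and let P ∈ K*. Then for D ∈ V the following are equivalent: (i) ⟨D, γ⟩ ≥ 0 for every γ ∈ K with ⟨P, γ⟩ = 0; (ii) for every ε > 0 there exists α > 0 such that D + εA + αP ∈ K*. -/

import Mathlib

/-!
Fix `ε > 0`. On the compact slice `S = K ∩ {‖γ‖ = 1}` the function `⟪P, ·⟫` is nonnegative, and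
`⟪D + ε • A, ·⟫` is positive wherever it vanishes. Hence on the compact part of `S` where
`⟪D + ε • A, ·⟫ ≤ 0`, `⟪P, ·⟫` is bounded away from `0`, while `⟪D + ε • A, ·⟫` is bounded below on
`S`, so a large multiple `α` of `⟪P, ·⟫` compensates; homogeneity extends the inequality to `K`. Conversely, on a `P`-trivial
`γ` the term `α • P` disappears and letting `ε → 0` gives `⟪D, γ⟫ ≥ 0`.
-/

open Metric Filter Topology

open scoped RealInnerProductSpace

theorem IsCompact.exists_pos_forall_add_mul_pos {X : Type*} [TopologicalSpace X] {S : Set X}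
    (hS : IsCompact S) {f g : X → ℝ} (hf : Continuous f) (hg : Continuous g)
    (hg_nonneg : ∀ x ∈ S, 0 ≤ g x) (hf_pos : ∀ x ∈ S, g x = 0 → 0 < f x) :
    ∃ α > 0, ∀ x ∈ S, 0 < f x + α * g x := by
  have hT : IsCompact (S ∩ {x | f x ≤ 0}) := hS.inter_right (isClosed_le hf continuous_const)
  obtain ⟨m, hm, hgm⟩ : ∃ m, 0 < m ∧ ∀ x ∈ S ∩ {x | f x ≤ 0}, m ≤ g x :=
    hT.exists_forall_le' hg.continuousOn fun x ⟨hxS, hfx⟩ ↦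
      (hg_nonneg x hxS).lt_of_ne fun hgx ↦ (hf_pos x hxS hgx.symm).not_ge hfx
  obtain ⟨c, hc⟩ := hS.bddBelow_image hf.continuousOn
  refine ⟨(|c| + 1) / m, by positivity, fun x hx ↦ ?_⟩
  rcases lt_or_ge 0 (f x) with hfx | hfx
  · have := hg_nonneg x hx
    positivity
  · have hcf : c ≤ f x := hc ⟨x, hx, rfl⟩
    calc 0 < c + (|c| + 1) := by linarith [neg_abs_le c]
      _ = c + (|c| + 1) / m * m := by field_simp
      _ ≤ f x + (|c| + 1) / m * g x := by gcongr; exact hgm x ⟨hx, hfx⟩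

theorem inner_nonneg_of_inner_nonneg_on_sphere {V : Type*} [NormedAddCommGroup V]
    [InnerProductSpace ℝ V] {K : Set V} (hKsmul : ∀ (c : ℝ), 0 ≤ c → ∀ x ∈ K, c • x ∈ K)
    {v : V} (h : ∀ γ ∈ K ∩ sphere 0 1, 0 ≤ ⟪v, γ⟫) : ∀ γ ∈ K, 0 ≤ ⟪v, γ⟫ := by
  intro γ hγ
  rcases eq_or_ne γ 0 with rfl | hγ0
  · simp
  have hnorm : 0 < ‖γ‖ := norm_pos_iff.mpr hγ0
  have hunit : ‖γ‖⁻¹ • γ ∈ K ∩ sphere 0 1 :=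
    ⟨hKsmul _ (by positivity) γ hγ, by simp [norm_smul, hnorm.ne']⟩
  have := h _ hunit
  rw [real_inner_smul_right] at this
  exact nonneg_of_mul_nonneg_right this (by positivity)

theorem nonneg_of_forall_pos_add_mul_nonneg {d c : ℝ} (h : ∀ ε > 0, 0 ≤ d + ε * c) : 0 ≤ d := by
  have hlim : Tendsto (fun ε ↦ d + ε * c) (𝓝[>] 0) (𝓝 d) := by
    have : Continuous fun ε : ℝ ↦ d + ε * c := by fun_prop
    simpa using (this.tendsto 0).mono_left nhdsWithin_le_nhds
  exact ge_of_tendsto hlim (eventually_nhdsWithin_of_forall h)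

theorem stmt_13_general {V : Type*} [NormedAddCommGroup V] [InnerProductSpace ℝ V]
    [FiniteDimensional ℝ V]
    (K : Set V) (hKclosed : IsClosed K)
    (hKsmul : ∀ (c : ℝ), 0 ≤ c → ∀ x ∈ K, c • x ∈ K)
    (A : V) (hA : ∀ γ ∈ K, γ ≠ 0 → 0 < (inner ℝ A γ : ℝ))
    (P : V) (hP : ∀ γ ∈ K, 0 ≤ (inner ℝ P γ : ℝ))
    (D : V) :
    (∀ γ ∈ K, (inner ℝ P γ : ℝ) = 0 → 0 ≤ (inner ℝ D γ : ℝ)) ↔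
    (∀ ε > (0 : ℝ), ∃ α > (0 : ℝ),
      ∀ γ ∈ K, 0 ≤ (inner ℝ (D + ε • A + α • P) γ : ℝ)) := by
  constructor
  · intro hD ε hε
    have hS : IsCompact (K ∩ sphere (0 : V) 1) := (isCompact_sphere 0 1).inter_left hKclosed
    have hpos : ∀ γ ∈ K ∩ sphere (0 : V) 1, ⟪P, γ⟫ = 0 → 0 < ⟪D + ε • A, γ⟫ := by
      rintro γ ⟨hγK, hγ1⟩ hPγ
      have hγ0 : γ ≠ 0 := ne_zero_of_mem_unit_sphere ⟨γ, hγ1⟩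
      rw [inner_add_left, real_inner_smul_left]
      nlinarith [hD γ hγK hPγ, hA γ hγK hγ0]
    obtain ⟨α, hα, hα_pos⟩ := hS.exists_pos_forall_add_mul_pos (by fun_prop) (by fun_prop)
      (fun γ hγ ↦ hP γ hγ.1) hpos
    refine ⟨α, hα, inner_nonneg_of_inner_nonneg_on_sphere hKsmul fun γ hγ ↦ ?_⟩
    rw [inner_add_left, real_inner_smul_left]
    exact (hα_pos γ hγ).le
  · intro h γ hγ hPγ
    refine nonneg_of_forall_pos_add_mul_nonneg (c := ⟪A, γ⟫) fun ε hε ↦ ?_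
    obtain ⟨α, -, hα⟩ := h ε hε
    simpa [inner_add_left, real_inner_smul_left, hPγ] using hα γ hγ

theorem stmt_13 {V : Type*} [NormedAddCommGroup V] [InnerProductSpace ℝ V]
    [FiniteDimensional ℝ V]
    (K : Set V) (hKclosed : IsClosed K)
    (hKsmul : ∀ (c : ℝ), 0 ≤ c → ∀ x ∈ K, c • x ∈ K)
    (hKadd : ∀ x ∈ K, ∀ y ∈ K, x + y ∈ K)
    (A : V) (hA : ∀ γ ∈ K, γ ≠ 0 → 0 < (inner ℝ A γ : ℝ))
    (P : V) (hP : ∀ γ ∈ K, 0 ≤ (inner ℝ P γ : ℝ))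
    (D : V) :
    (∀ γ ∈ K, (inner ℝ P γ : ℝ) = 0 → 0 ≤ (inner ℝ D γ : ℝ)) ↔
    (∀ ε > (0 : ℝ), ∃ α > (0 : ℝ),
      ∀ γ ∈ K, 0 ≤ (inner ℝ (D + ε • A + α • P) γ : ℝ)) :=
  stmt_13_general K hKclosed hKsmul A hA P hP D
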